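/- Let H be a Hopf algebra, B an algebra with differential calculus (Γ(B), d), R ⊂ ker ε a right ideal of H that is Ad-invariant (i.e., Σ r₂ ⊗ S(r₁)r₃ ∈ R ⊗ H for all r ∈ R), and τ : H → B a unital algebra homomorphism with central image such that Σ τ(S(r₁)) dτ(r₂) = 0 for all r ∈ R and (da)τ(h) = τ(h)(da) for all a ∈ B, h ∈ H. If A : H → Γ¹(B) is a linear map with A(1) = 0 and A(R) = 0, then the gauge transformed map A'(h) = Σ A(h₂) τ(S(h₁)h₃) + Σ τ(S(h₁)) dτ(h₂) also satisfies A'(1) = 0 and A'(R) = 0. -/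
import Mathlib


open TensorProduct

variable {k : Type*} [Field k]
variable {H : Type*} [Ring H] [HopfAlgebra k H]
variable {B : Type*} [Ring B] [Algebra k B]
variable {Γ : Type*} [AddCommGroup Γ] [Module k Γ]
  [Module B Γ] [Module Bᵐᵒᵖ Γ]
  [IsScalarTower k B Γ] [IsScalarTower k Bᵐᵒᵖ Γ]
  [SMulCommClass k B Γ] [SMulCommClass k Bᵐᵒᵖ Γ]
  [SMulCommClass B Bᵐᵒᵖ Γ]

/-- Left action of `B` on the bimodule `Γ`, as a `k`-bilinear map. -/
noncomputable def lact : B →ₗ[k] Γ →ₗ[k] Γ :=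
  LinearMap.mk₂ k (fun b v => b • v)
    (fun b₁ b₂ v => add_smul b₁ b₂ v)
    (fun c b v => smul_assoc c b v)
    (fun b v₁ v₂ => smul_add b v₁ v₂)
    (fun c b v => (smul_comm c b v).symm)

/-- Right action of `B` on the bimodule `Γ`, as a `k`-bilinear map. -/
noncomputable def ract : B →ₗ[k] Γ →ₗ[k] Γ :=
  LinearMap.mk₂ k (fun b v => MulOpposite.op b • v)
    (fun b₁ b₂ v => by simp [add_smul])
    (fun c b v => by simp [MulOpposite.op_smul, smul_assoc])
    (fun b v₁ v₂ => smul_add _ v₁ v₂)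
    (fun c b v => (smul_comm c _ v).symm)

/-- The adjoint-type map `h ↦ Σ h₂ ⊗ S(h₁)h₃`. -/
noncomputable def adMapH : H →ₗ[k] H ⊗[k] H :=
  (TensorProduct.map LinearMap.id
      (LinearMap.mul' k H ∘ₗ
        TensorProduct.map (HopfAlgebra.antipode (R := k)) LinearMap.id)) ∘ₗ
    (TensorProduct.assoc k H H H).toLinearMap ∘ₗ
    (TensorProduct.map (TensorProduct.comm k H H).toLinearMap LinearMap.id) ∘ₗ
    (TensorProduct.map (Coalgebra.comul : H →ₗ[k] H ⊗[k] H) LinearMap.id) ∘ₗ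
    (Coalgebra.comul : H →ₗ[k] H ⊗[k] H)

/-- `A'(h) = Σ A(h₂)·τ(S(h₁)h₃) + Σ τ(S(h₁))·dτ(h₂)`. -/
noncomputable def gaugeAAd (d : B →ₗ[k] Γ) (τ : H →ₗ[k] B) (A : H →ₗ[k] Γ) :
    H →ₗ[k] Γ :=
  (TensorProduct.lift ((ract (B := B) (Γ := Γ)).flip) ∘ₗ
    TensorProduct.map A τ ∘ₗ (adMapH (k := k) (H := H))) +
  (TensorProduct.lift (lact (B := B) (Γ := Γ)) ∘ₗ
    TensorProduct.map (τ ∘ₗ (HopfAlgebra.antipode (R := k))) (d ∘ₗ τ) ∘ₗ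
    (Coalgebra.comul : H →ₗ[k] H ⊗[k] H))

theorem statement_13 (d : B →ₗ[k] Γ)
    (hd1 : d 1 = 0)
    (hLeibniz : ∀ a b : B, d (a * b) = MulOpposite.op b • d a + a • d b)
    (R : Submodule k H)
    (hRker : ∀ r ∈ R, (Coalgebra.counit : H →ₗ[k] k) r = 0)
    (hRideal : ∀ r ∈ R, ∀ h : H, r * h ∈ R)
    (hRad : ∀ r ∈ R, adMapH (k := k) r ∈
      LinearMap.range (TensorProduct.map R.subtype (LinearMap.id : H →ₗ[k] H)))
    (τ : H →ₐ[k] B)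
    (hcentral : ∀ (h : H) (b : B), τ h * b = b * τ h)
    (hτd1 : ∀ r ∈ R,
      (TensorProduct.lift (lact (B := B) (Γ := Γ)) ∘ₗ
        TensorProduct.map (τ.toLinearMap ∘ₗ (HopfAlgebra.antipode (R := k)))
          (d ∘ₗ τ.toLinearMap) ∘ₗ
        (Coalgebra.comul : H →ₗ[k] H ⊗[k] H)) r = 0)
    (hτd2 : ∀ (a : B) (h : H), MulOpposite.op (τ h) • d a = τ h • d a)
    (A : H →ₗ[k] Γ) (hA1 : A 1 = 0) (hAR : ∀ r ∈ R, A r = 0) :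
    gaugeAAd d τ.toLinearMap A 1 = 0 ∧
    ∀ r ∈ R, gaugeAAd d τ.toLinearMap A r = 0 := by
  constructor
  · simp only [gaugeAAd, LinearMap.add_apply, LinearMap.comp_apply]
    have hc : (Coalgebra.comul : H →ₗ[k] H ⊗[k] H) 1 = 1 ⊗ₜ[k] 1 := by
      simpa [Algebra.TensorProduct.one_def] using Bialgebra.comul_one k H
    have hS : HopfAlgebra.antipode (R := k) (1 : H) = 1 := by
      have h2 := HopfAlgebra.mul_antipode_rTensor_comul_apply (R := k) (1 : H)
      rw [hc] at h2
      simpa using h2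
    have had : adMapH (k := k) (H := H) 1 = (1 : H) ⊗ₜ[k] 1 := by
      simp [adMapH, LinearMap.comp_apply, hc, hS]
    rw [had, hc]
    simp [ract, lact, hA1, hd1]
  · intro r hr
    obtain ⟨x, hx⟩ := hRad r hr
    have h1 : TensorProduct.map A τ.toLinearMap (adMapH (k := k) r) = 0 := by
      rw [← hx, ← LinearMap.comp_apply, ← TensorProduct.map_comp]
      have : A ∘ₗ R.subtype = 0 := by
        ext ⟨y, hy⟩; exact hAR y hy
      simp [this]
    simp only [gaugeAAd, LinearMap.add_apply, LinearMap.comp_apply] at *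
    rw [h1]
    simpa using hτd1 r hr
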